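/- Let E be a finite set with an involution H ↦ H* := E∖H, and let c, k, s, s^⊥ and their starred counterparts satisfy c(H*) − c(E*) = k(H), c(H) − c(E) = k(H*), s(H*) = s^⊥(H), s^⊥(H*) = s(H), together with n(H) = k(H) + g + s(H)/2 − s^⊥(H)/2 and c(H) = V₀ − |H| + n(H), n(H*) = k(H*) + g + s(H*)/2 − s^⊥(H*)/2, c(H*) = V₀* − |H*| + n(H*). Then the multivariate polynomials P̄_G(q,v,A,B) = Σ_H q^{c(H)} A^{s(H)/2} B^{s^⊥(H)/2} Π_{e∈H} v_e with all v_e = v satisfy P̄_{G*}(q, v, A, B) = q^{−g + c(E*) − V₀} v^{|E|} P̄_G(q, q/v, B/q, Aq). -/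
import Mathlib


open Finset

/-- Duality for the multivariate surface polynomial
`P̄_G(q,v,A,B) = Σ_H q^(c(H)) A^(s(H)/2) B^(s^⊥(H)/2) Π_{e∈H} v_e` of a cellulation `G` of a
closed orientable surface of genus `g`, with all edge weights equal to `v`.  The edges of `G`
and its dual `G*` are identified with a finite set `E`, the dual spanning subgraph of `H` is
`H* = E ∖ H`, and the invariants `c, k, s, s^⊥, n` of `G` and `c', k', s', s'^⊥, n'` of `G*`
satisfy the listed topological identities.  Then (working with invertible elements `q, v, A, B`
of a commutative ring, so that the Laurent expressions make sense):
`P̄_{G*}(q, v, A, B) = q^(−g + c(G*) − v(G)) · v^(|E|) · P̄_G(q, q/v, B/q, A·q)`. -/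
theorem multivariate_duality {R : Type*} [CommRing R] {E : Type*} [Fintype E] [DecidableEq E]
    (q v A B : Rˣ)
    (c k s t c' k' s' t' : Finset E → ℕ) (n n' : Finset E → ℤ) (g : ℤ) (V₀ V₀' : ℕ)
    (hs : ∀ H, Even (s H)) (ht : ∀ H, Even (t H))
    (hs' : ∀ H, Even (s' H)) (ht' : ∀ H, Even (t' H))
    (h1 : ∀ H : Finset E, c' Hᶜ = k H + c' univ)
    (h2 : ∀ H : Finset E, c H = k' Hᶜ + c univ)
    (h3 : ∀ H : Finset E, s' Hᶜ = t H)
    (h4 : ∀ H : Finset E, t' Hᶜ = s H)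
    (hn : ∀ H, n H = (k H : ℤ) + g + ((s H / 2 : ℕ) : ℤ) - ((t H / 2 : ℕ) : ℤ))
    (hc : ∀ H : Finset E, (c H : ℤ) = (V₀ : ℤ) - H.card + n H)
    (hn' : ∀ H, n' H = (k' H : ℤ) + g + ((s' H / 2 : ℕ) : ℤ) - ((t' H / 2 : ℕ) : ℤ))
    (hc' : ∀ H : Finset E, (c' H : ℤ) = (V₀' : ℤ) - H.card + n' H) :
    (∑ H : Finset E,
        (q : R) ^ c' H * (A : R) ^ (s' H / 2) * (B : R) ^ (t' H / 2) * (v : R) ^ H.card)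
      = ((q ^ (-g + (c' (univ : Finset E) : ℤ) - (V₀ : ℤ)) : Rˣ) : R) *
          (v : R) ^ Fintype.card E *
          ∑ H : Finset E,
            (q : R) ^ c H * ((B * q⁻¹ : Rˣ) : R) ^ (s H / 2) *
              ((A * q : Rˣ) : R) ^ (t H / 2) * ((q * v⁻¹ : Rˣ) : R) ^ H.card := by

  -- key pointwise identity in the unit group
  have key : ∀ H : Finset E,
      (q ^ (-g + (c' (univ : Finset E) : ℤ) - (V₀ : ℤ)) * v ^ Fintype.card E *
        (q ^ c H * (B * q⁻¹) ^ (s H / 2) * (A * q) ^ (t H / 2) * (q * v⁻¹) ^ H.card) : Rˣ)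
        = q ^ c' Hᶜ * A ^ (s' Hᶜ / 2) * B ^ (t' Hᶜ / 2) * v ^ Hᶜ.card := by
    intro H
    have hm : H.card ≤ Fintype.card E := Finset.card_le_univ H
    rw [h3 H, h4 H, card_compl]
    have hq : ((c' Hᶜ : ℕ) : ℤ) =
        (-g + (c' (univ : Finset E) : ℤ) - (V₀ : ℤ)) + (c H : ℤ) + ((t H / 2 : ℕ) : ℤ)
          + (H.card : ℤ) - ((s H / 2 : ℕ) : ℤ) := by
      have e1 := h1 H
      have e2 := hc H
      have e3 := hn H
      omega
    have hv : ((Fintype.card E - H.card : ℕ) : ℤ) = (Fintype.card E : ℤ) - (H.card : ℤ) :=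
      Nat.cast_sub hm
    calc q ^ (-g + (c' (univ : Finset E) : ℤ) - (V₀ : ℤ)) * v ^ Fintype.card E *
          (q ^ c H * (B * q⁻¹) ^ (s H / 2) * (A * q) ^ (t H / 2) * (q * v⁻¹) ^ H.card)
        = q ^ (((c' Hᶜ : ℕ) : ℤ)) * A ^ (t H / 2) * B ^ (s H / 2) *
            v ^ (((Fintype.card E - H.card : ℕ) : ℤ)) := by
          rw [hq, hv]
          simp only [mul_pow, inv_pow]
          simp only [← zpow_natCast, ← zpow_neg, zpow_add, zpow_sub, div_eq_mul_inv, zpow_neg]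
          simp only [mul_comm, mul_left_comm, mul_assoc]
      _ = q ^ c' Hᶜ * A ^ (t H / 2) * B ^ (s H / 2) * v ^ (Fintype.card E - H.card) := by
          rw [zpow_natCast, zpow_natCast]
  -- reindex by complementation
  rw [Finset.mul_sum]
  refine (Fintype.sum_equiv (Function.Involutive.toPerm _ (compl_compl (α := Finset E)))
    _ _ fun H => ?_).symm
  have := key H
  calc ((q ^ (-g + (c' (univ : Finset E) : ℤ) - (V₀ : ℤ)) : Rˣ) : R) *
        (v : R) ^ Fintype.card E *
          ((q : R) ^ c H * ((B * q⁻¹ : Rˣ) : R) ^ (s H / 2) *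
            ((A * q : Rˣ) : R) ^ (t H / 2) * ((q * v⁻¹ : Rˣ) : R) ^ H.card)
      = ((q ^ (-g + (c' (univ : Finset E) : ℤ) - (V₀ : ℤ)) * v ^ Fintype.card E *
          (q ^ c H * (B * q⁻¹) ^ (s H / 2) * (A * q) ^ (t H / 2) * (q * v⁻¹) ^ H.card) : Rˣ) : R) := by
        push_cast
        ring
    _ = ((q ^ c' Hᶜ * A ^ (s' Hᶜ / 2) * B ^ (t' Hᶜ / 2) * v ^ Hᶜ.card : Rˣ) : R) := by
        rw [key H]
    _ = (q : R) ^ c' Hᶜ * (A : R) ^ (s' Hᶜ / 2) * (B : R) ^ (t' Hᶜ / 2) * (v : R) ^ Hᶜ.card := by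
        push_cast
        ring
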